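/- Let f ∈ ℝ[y] be a nonzero univariate real polynomial and a < b real numbers with f(a) ≠ 0 and f(b) ≠ 0. Then the number of distinct real roots of f in the open interval (a,b) equals var(f,a) − var(f,b), where var(f,c) is the number of sign changes in the Sturm sequence of f evaluated at c. -/
import Mathlib

open Polynomial

noncomputable def sturmAux (f : Polynomial ℝ) : ℕ → Polynomial ℝ × Polynomial ℝ
  | 0 => (f, derivative f)
  | n + 1 => ((sturmAux f n).2, -((sturmAux f n).1 % (sturmAux f n).2))

noncomputable def sturmSeq (f : Polynomial ℝ) (j : ℕ) : Polynomial ℝ :=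
  (sturmAux f j).1

noncomputable def sturmLength (f : Polynomial ℝ) : ℕ :=
  sInf {j : ℕ | sturmSeq f j = 0}

noncomputable def signChanges : List ℝ → ℕ
  | [] => 0
  | [_] => 0
  | a :: b :: t => (if a * b < 0 then 1 else 0) + signChanges (b :: t)

noncomputable def sturmVar (f : Polynomial ℝ) (c : ℝ) : ℕ :=
  signChanges ((((List.range (sturmLength f)).map
    (fun j => (sturmSeq f j).eval c))).filter (fun x => x ≠ 0))

/-! ### List combinatorics -/

noncomputable def evalList (v : ℕ → ℝ) : ℕ → List ℝ
  | 0 => []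
  | k+1 => v 0 :: evalList (fun i => v (i+1)) k

theorem evalList_eq_range_map (v : ℕ → ℝ) (k : ℕ) :
    evalList v k = (List.range k).map v := by
  induction k generalizing v with
  | zero => rfl
  | succ n ih =>
      rw [List.range_succ_eq_map]
      simp [evalList, ih, Function.comp]

/-- variation at a point: number of sign changes of the nonzero entries. -/
noncomputable def SCF (v : ℕ → ℝ) (k : ℕ) : ℕ :=
  signChanges ((evalList v k).filter (fun x => x ≠ 0))

noncomputable def SC (v : ℕ → ℝ) (k : ℕ) : ℕ :=
  signChanges (evalList v k)

theorem signChanges_cons_cons (a b : ℝ) (t : List ℝ) :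
    signChanges (a :: b :: t) = (if a * b < 0 then 1 else 0) + signChanges (b :: t) := rfl

theorem filter_cons_of_ne (a : ℝ) (t : List ℝ) (h : a ≠ 0) :
    (a :: t).filter (fun x => x ≠ 0) = a :: t.filter (fun x => x ≠ 0) := by
  simp [List.filter, h]

theorem filter_cons_of_eq (a : ℝ) (t : List ℝ) (h : a = 0) :
    (a :: t).filter (fun x => x ≠ 0) = t.filter (fun x => x ≠ 0) := by
  simp [List.filter, h]

theorem SCF_eq_SC (v : ℕ → ℝ) (k : ℕ) (h : ∀ j, j < k → v j ≠ 0) :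
    SCF v k = SC v k := by
  unfold SCF SC
  congr 1
  induction k generalizing v with
  | zero => rfl
  | succ n ih =>
      rw [show evalList v (n+1) = v 0 :: evalList (fun i => v (i+1)) n from rfl,
        filter_cons_of_ne _ _ (h 0 (Nat.succ_pos n)),
        ih (fun i => v (i+1)) (fun j hj => h (j+1) (by omega))]

theorem signChanges_map_mul (κ : ℝ) (hκ : κ ≠ 0) :
    ∀ l : List ℝ, signChanges (l.map (fun x => κ * x)) = signChanges l
  | [] => rfl
  | [a] => rfl
  | a :: b :: t => by
      rw [List.map_cons, List.map_cons, signChanges_cons_cons,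
        show (κ * b) :: t.map (fun x => κ * x) = ((b :: t).map (fun x => κ * x)) from rfl,
        signChanges_map_mul κ hκ (b :: t), signChanges_cons_cons]
      congr 1
      have h2 : (0:ℝ) < κ^2 := by positivity
      have : κ * a * (κ * b) = κ^2 * (a * b) := by ring
      rw [this]
      by_cases hab : a * b < 0
      · simp [hab, mul_neg_of_pos_of_neg h2 hab]
      · have : ¬ (κ^2 * (a*b) < 0) := by
          push_neg at hab ⊢
          exact mul_nonneg h2.le hab
        simp [hab, this]

theorem SCF_smul (κ : ℝ) (hκ : κ ≠ 0) (v : ℕ → ℝ) (k : ℕ) :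
    SCF (fun j => κ * v j) k = SCF v k := by
  unfold SCF
  have h1 : evalList (fun j => κ * v j) k = (evalList v k).map (fun x => κ * x) := by
    induction k generalizing v with
    | zero => rfl
    | succ n ih => simp [evalList, ih]
  rw [h1, List.filter_map]
  have h2 : ((fun x : ℝ => decide (x ≠ 0)) ∘ (fun x : ℝ => κ * x)) = (fun x : ℝ => decide (x ≠ 0)) := by
    funext x
    simp [Function.comp, hκ]
  rw [h2, ← signChanges_map_mul κ hκ ((evalList v k).filter (fun x => x ≠ 0))]
theorem evalList_succ (v : ℕ → ℝ) (k : ℕ) :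
    evalList v (k+1) = v 0 :: evalList (fun i => v (i+1)) k := rfl

theorem SC_two (v : ℕ → ℝ) (k : ℕ) :
    SC v (k+2) = (if v 0 * v 1 < 0 then 1 else 0) + SC (fun i => v (i+1)) (k+1) := by
  unfold SC
  rw [evalList_succ, evalList_succ]
  rw [signChanges_cons_cons]

/-- sign agreement transfers sign-change indicators -/
theorem ite_sign_congr {a b a' b' : ℝ} (ha : a * a' > 0) (hb : b * b' > 0) :
    (if a * b < 0 then (1:ℕ) else 0) = (if a' * b' < 0 then 1 else 0) := by
  have : a * b < 0 ↔ a' * b' < 0 := by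
    constructor <;> intro h <;> nlinarith
  simp [this]

/-- The core comparison lemma: `ε` is a list of nonzero values (the evaluations at a
nearby clean point), `δ` the evaluations at the base point; they are sign-consistent
where `δ` is nonzero, interior zeros of `δ` are flanked by opposite signs, and the two
ends of `δ` are nonzero.  Then the sign changes agree. -/
theorem core : ∀ k : ℕ, ∀ ε δ : ℕ → ℝ,
    (∀ j, j < k → ε j ≠ 0) →
    (∀ j, j < k → δ j ≠ 0 → ε j * δ j > 0) →
    (∀ j, 0 < j → j + 1 < k → δ j = 0 → δ (j-1) * δ (j+1) < 0) →
    δ (k-1) ≠ 0 → δ 0 ≠ 0 →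
    SC ε k = SCF δ k := by
  intro k
  induction k using Nat.strong_induction_on with
  | _ k ih =>
    match k with
    | 0 => intro ε δ _ _ _ _ _; rfl
    | 1 =>
        intro ε δ _ _ _ _ h0
        show SC ε 1 = SCF δ 1
        unfold SC SCF
        rw [show evalList ε 1 = [ε 0] from rfl, show evalList δ 1 = [δ 0] from rfl,
          filter_cons_of_ne _ _ h0]
        rfl
    | (m+2) =>
        intro ε δ hε hcons hmid hlast h0
        by_cases h1 : δ 1 = 0
        · -- second entry vanishes; peel two
          match m with
          | 0 => exact absurd h1 hlast
          | (m'+1) =>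
            have h02 : δ 0 * δ 2 < 0 := by
              have := hmid 1 (by omega) (by omega) h1
              simpa using this
            have h2 : δ 2 ≠ 0 := by
              intro h; rw [h, mul_zero] at h02; exact absurd h02 (lt_irrefl 0)
            -- LHS: first two indicators sum to 1
            have e0 : ε 0 * δ 0 > 0 := hcons 0 (by omega) h0
            have e2 : ε 2 * δ 2 > 0 := hcons 2 (by omega) h2
            have hε1 : ε 1 ≠ 0 := hε 1 (by omega)
            have hfirsttwo :
                (if ε 0 * ε 1 < 0 then (1:ℕ) else 0) + (if ε 1 * ε 2 < 0 then 1 else 0) = 1 := by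
              have hε02 : ε 0 * ε 2 < 0 := by nlinarith
              rcases lt_or_gt_of_ne hε1 with h | h
              · rcases lt_trichotomy (ε 0) 0 with h0' | h0' | h0'
                · have : ¬ (ε 0 * ε 1 < 0) := by nlinarith
                  have h2' : ε 1 * ε 2 < 0 := by nlinarith
                  simp [this, h2']
                · exact absurd h0' (by intro hh; exact hε 0 (by omega) hh)
                · have : ε 0 * ε 1 < 0 := by nlinarith
                  have h2' : ¬ (ε 1 * ε 2 < 0) := by nlinarith
                  simp [this, h2']
              · rcases lt_trichotomy (ε 0) 0 with h0' | h0' | h0'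
                · have : ε 0 * ε 1 < 0 := by nlinarith
                  have h2' : ¬ (ε 1 * ε 2 < 0) := by nlinarith
                  simp [this, h2']
                · exact absurd h0' (by intro hh; exact hε 0 (by omega) hh)
                · have : ¬ (ε 0 * ε 1 < 0) := by nlinarith
                  have h2' : ε 1 * ε 2 < 0 := by nlinarith
                  simp [this, h2']
            -- RHS : filter drops δ 1
            have hRHS : SCF δ (m'+3) =
                1 + SCF (fun i => δ (i+2)) (m'+1) := by
              unfold SCF
              rw [show evalList δ (m'+3)
                  = δ 0 :: δ 1 :: evalList (fun i => δ (i+2)) (m'+1) from rfl,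
                filter_cons_of_ne _ _ h0, filter_cons_of_eq _ _ h1]
              have : evalList (fun i => δ (i+2)) (m'+1)
                  = δ 2 :: evalList (fun i => δ (i+3)) m' := rfl
              rw [this, filter_cons_of_ne _ _ h2, signChanges_cons_cons]
              rw [if_pos h02]
            rw [hRHS]
            have hLHS : SC ε (m'+3) = (if ε 0 * ε 1 < 0 then 1 else 0) +
                ((if ε 1 * ε 2 < 0 then 1 else 0) + SC (fun i => ε (i+2)) (m'+1)) := by
              rw [SC_two, SC_two]
            rw [hLHS, ← add_assoc, hfirsttwo]
            congr 1
            exact ih (m'+1) (by omega) (fun i => ε (i+2)) (fun i => δ (i+2))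
              (fun j hj => hε (j+2) (by omega))
              (fun j hj hne => hcons (j+2) (by omega) hne)
              (fun j hj hj1 hz => by
                have := hmid (j+2) (by omega) (by omega) hz
                simpa [show j+2-1 = (j-1)+2 by omega] using this)
              (by simpa [show m'+1-1+2 = m'+3-1 by omega] using hlast) h2
        · -- second entry nonzero; peel one
          have e0 : ε 0 * δ 0 > 0 := hcons 0 (by omega) h0
          have e1 : ε 1 * δ 1 > 0 := hcons 1 (by omega) h1
          have hRHS : SCF δ (m+2) =
              (if δ 0 * δ 1 < 0 then 1 else 0) + SCF (fun i => δ (i+1)) (m+1) := by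
            unfold SCF
            rw [show evalList δ (m+2) = δ 0 :: evalList (fun i => δ (i+1)) (m+1) from rfl,
              filter_cons_of_ne _ _ h0]
            have : evalList (fun i => δ (i+1)) (m+1)
                = δ 1 :: evalList (fun i => δ (i+2)) m := rfl
            rw [this, filter_cons_of_ne _ _ h1, signChanges_cons_cons, ← filter_cons_of_ne _ _ h1]
          rw [hRHS, SC_two, ite_sign_congr e0 e1]
          congr 1
          exact ih (m+1) (by omega) (fun i => ε (i+1)) (fun i => δ (i+1))
            (fun j hj => hε (j+1) (by omega))
            (fun j hj hne => hcons (j+1) (by omega) hne)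
            (fun j hj hj1 hz => by
              have := hmid (j+1) (by omega) (by omega) hz
              simpa [show j+1-1 = (j-1)+1 by omega] using this)
            (by simpa [show m+1-1+1 = m+2-1 by omega] using hlast) h1

/-- variant of `core` where the head of `δ` vanishes and the first two `ε`s agree in sign. -/
theorem core0 (k : ℕ) (ε δ : ℕ → ℝ) (hk : 2 ≤ k)
    (hε : ∀ j, j < k → ε j ≠ 0)
    (hcons : ∀ j, j < k → δ j ≠ 0 → ε j * δ j > 0)
    (hmid : ∀ j, 0 < j → j + 1 < k → δ j = 0 → δ (j-1) * δ (j+1) < 0)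
    (hlast : δ (k-1) ≠ 0) (h0 : δ 0 = 0) (h1 : δ 1 ≠ 0)
    (hsame : ε 0 * ε 1 > 0) :
    SC ε k = SCF δ k := by
  obtain ⟨m, rfl⟩ : ∃ m, k = m + 2 := ⟨k - 2, by omega⟩
  have hRHS : SCF δ (m+2) = SCF (fun i => δ (i+1)) (m+1) := by
    unfold SCF
    rw [show evalList δ (m+2) = δ 0 :: evalList (fun i => δ (i+1)) (m+1) from rfl,
      filter_cons_of_eq _ _ h0]
  have htail : SC (fun i => ε (i+1)) (m+1) = SCF (fun i => δ (i+1)) (m+1) := by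
    apply core (m+1) (fun i => ε (i+1)) (fun i => δ (i+1))
      (fun j hj => hε (j+1) (by omega))
      (fun j hj hne => hcons (j+1) (by omega) hne)
      (fun j hj hj1 hz => by
        have := hmid (j+1) (by omega) (by omega) hz
        simpa [show j+1-1 = (j-1)+1 by omega] using this)
      (by simpa [show m+1-1+1 = m+2-1 by omega] using hlast) h1
  rw [hRHS, SC_two, ← htail, if_neg (by push_neg; nlinarith), zero_add]

/-- variant of `core` where the head of `δ` vanishes and the first two `ε`s have
opposite signs: one extra sign change on the `ε` side. -/
theorem core1 (k : ℕ) (ε δ : ℕ → ℝ) (hk : 2 ≤ k)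
    (hε : ∀ j, j < k → ε j ≠ 0)
    (hcons : ∀ j, j < k → δ j ≠ 0 → ε j * δ j > 0)
    (hmid : ∀ j, 0 < j → j + 1 < k → δ j = 0 → δ (j-1) * δ (j+1) < 0)
    (hlast : δ (k-1) ≠ 0) (h0 : δ 0 = 0) (h1 : δ 1 ≠ 0)
    (hopp : ε 0 * ε 1 < 0) :
    SC ε k = SCF δ k + 1 := by
  obtain ⟨m, rfl⟩ : ∃ m, k = m + 2 := ⟨k - 2, by omega⟩
  have hRHS : SCF δ (m+2) = SCF (fun i => δ (i+1)) (m+1) := by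
    unfold SCF
    rw [show evalList δ (m+2) = δ 0 :: evalList (fun i => δ (i+1)) (m+1) from rfl,
      filter_cons_of_eq _ _ h0]
  have htail : SC (fun i => ε (i+1)) (m+1) = SCF (fun i => δ (i+1)) (m+1) := by
    apply core (m+1) (fun i => ε (i+1)) (fun i => δ (i+1))
      (fun j hj => hε (j+1) (by omega))
      (fun j hj hne => hcons (j+1) (by omega) hne)
      (fun j hj hj1 hz => by
        have := hmid (j+1) (by omega) (by omega) hz
        simpa [show j+1-1 = (j-1)+1 by omega] using this)
      (by simpa [show m+1-1+1 = m+2-1 by omega] using hlast) h1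
  rw [hRHS, SC_two, ← htail, if_pos hopp]
  omega

/-! ### Sign constancy of polynomials without roots (IVT) -/

theorem sign_const {q : Polynomial ℝ} {c d : ℝ} (hcd : c ≤ d)
    (h : ∀ x ∈ Set.Icc c d, q.eval x ≠ 0) : q.eval c * q.eval d > 0 := by
  have hc := h c ⟨le_refl c, hcd⟩
  have hd := h d ⟨hcd, le_refl d⟩
  by_contra hcon
  push_neg at hcon
  have hprod : q.eval c * q.eval d < 0 :=
    lt_of_le_of_ne hcon (by
      intro hh
      rcases mul_eq_zero.1 hh with h' | h' <;> [exact hc h'; exact hd h'])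
  have hcont : ContinuousOn (fun x => q.eval x) (Set.Icc c d) :=
    (Polynomial.continuous q).continuousOn
  rcases lt_trichotomy (q.eval c) 0 with h1 | h1 | h1
  · have h2 : 0 < q.eval d := by nlinarith
    have : (0:ℝ) ∈ Set.Icc (q.eval c) (q.eval d) := ⟨h1.le, h2.le⟩
    obtain ⟨x, hx, hx0⟩ := intermediate_value_Icc hcd hcont this
    exact h x hx hx0
  · exact hc h1
  · have h2 : q.eval d < 0 := by nlinarith
    have : (0:ℝ) ∈ Set.Icc (q.eval d) (q.eval c) := ⟨h2.le, h1.le⟩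
    obtain ⟨x, hx, hx0⟩ := intermediate_value_Icc' hcd hcont this
    exact h x hx hx0

theorem eval_prod_ne (p : ℕ → Polynomial ℝ) (k j : ℕ) (hj : j < k) (x : ℝ)
    (h : (((Finset.range k).prod p)).eval x ≠ 0) : (p j).eval x ≠ 0 := by
  intro hz
  apply h
  rw [Polynomial.eval_prod]
  exact Finset.prod_eq_zero (Finset.mem_range.2 hj) hz

theorem chain_right (p : ℕ → Polynomial ℝ) (k : ℕ) (hk : 1 ≤ k)
    (hlast : ∀ x : ℝ, (p (k-1)).eval x ≠ 0)
    (hmid : ∀ j x, 0 < j → j + 1 < k → (p j).eval x = 0 →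
      (p (j-1)).eval x * (p (j+1)).eval x < 0)
    {c d : ℝ} (hcd : c < d)
    (hno : ∀ x ∈ Set.Ioc c d, ((Finset.range k).prod p).eval x ≠ 0)
    (h0 : (p 0).eval c ≠ 0) :
    SCF (fun j => (p j).eval c) k = SCF (fun j => (p j).eval d) k := by
  have hclean : ∀ j, j < k → (p j).eval d ≠ 0 := fun j hj =>
    eval_prod_ne p k j hj d (hno d ⟨hcd, le_refl d⟩)
  have hcons : ∀ j, j < k → (p j).eval c ≠ 0 → (p j).eval d * (p j).eval c > 0 := by
    intro j hj hne
    have := sign_const (q := p j) hcd.le (fun x hx => by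
      rcases eq_or_lt_of_le hx.1 with h | h
      · rwa [← h]
      · exact eval_prod_ne p k j hj x (hno x ⟨h, hx.2⟩))
    nlinarith
  rw [SCF_eq_SC _ _ hclean]
  exact (core k (fun j => (p j).eval d) (fun j => (p j).eval c) hclean hcons
    (fun j hj hj1 hz => hmid j c hj hj1 hz) (hlast c) h0).symm

theorem chain_left (p : ℕ → Polynomial ℝ) (k : ℕ) (hk : 1 ≤ k)
    (hlast : ∀ x : ℝ, (p (k-1)).eval x ≠ 0)
    (hmid : ∀ j x, 0 < j → j + 1 < k → (p j).eval x = 0 →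
      (p (j-1)).eval x * (p (j+1)).eval x < 0)
    {c d : ℝ} (hcd : c < d)
    (hno : ∀ x ∈ Set.Ico c d, ((Finset.range k).prod p).eval x ≠ 0)
    (h0 : (p 0).eval d ≠ 0) :
    SCF (fun j => (p j).eval c) k = SCF (fun j => (p j).eval d) k := by
  have hclean : ∀ j, j < k → (p j).eval c ≠ 0 := fun j hj =>
    eval_prod_ne p k j hj c (hno c ⟨le_refl c, hcd⟩)
  have hcons : ∀ j, j < k → (p j).eval d ≠ 0 → (p j).eval c * (p j).eval d > 0 := by
    intro j hj hne
    exact sign_const (q := p j) hcd.le (fun x hx => by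
      rcases eq_or_lt_of_le hx.2 with h | h
      · rwa [h]
      · exact eval_prod_ne p k j hj x (hno x ⟨hx.1, h⟩))
  rw [SCF_eq_SC _ _ hclean]
  exact core k (fun j => (p j).eval c) (fun j => (p j).eval d) hclean hcons
    (fun j hj hj1 hz => hmid j d hj hj1 hz) (hlast d) h0

theorem chain_cross (p : ℕ → Polynomial ℝ) (k : ℕ) (hk : 1 ≤ k)
    (hlast : ∀ x : ℝ, (p (k-1)).eval x ≠ 0)
    (hmid : ∀ j x, 0 < j → j + 1 < k → (p j).eval x = 0 →
      (p (j-1)).eval x * (p (j+1)).eval x < 0)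
    (hfst : ∀ ξ : ℝ, (p 0).eval ξ = 0 → ∃ u : Polynomial ℝ,
      p 0 = (X - C ξ) * u ∧ u.eval ξ ≠ 0 ∧ u.eval ξ * (p 1).eval ξ > 0)
    {c ξ d : ℝ} (h1 : c < ξ) (h2 : ξ < d)
    (hno : ∀ x ∈ Set.Icc c d, x ≠ ξ → ((Finset.range k).prod p).eval x ≠ 0)
    (hroot : (p 0).eval ξ = 0) :
    SCF (fun j => (p j).eval c) k = SCF (fun j => (p j).eval d) k + 1 := by
  have hk2 : 2 ≤ k := by
    rcases Nat.lt_or_ge k 2 with h | h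
    · exfalso
      have hk1 : k = 1 := by omega
      exact hlast ξ (by rwa [hk1])
    · exact h
  obtain ⟨u, hpu, huξ, hup1⟩ := hfst ξ hroot
  have hδ1 : (p 1).eval ξ ≠ 0 := by
    intro hz; rw [hz, mul_zero] at hup1; exact absurd hup1 (lt_irrefl 0)
  have hcleanc : ∀ j, j < k → (p j).eval c ≠ 0 := fun j hj =>
    eval_prod_ne p k j hj c (hno c ⟨le_refl c, by linarith⟩ (by linarith))
  have hcleand : ∀ j, j < k → (p j).eval d ≠ 0 := fun j hj =>
    eval_prod_ne p k j hj d (hno d ⟨by linarith, le_refl d⟩ (by intro hh; linarith [hh ▸ h2]))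
  -- sign consistency on each side
  have hconsc : ∀ j, j < k → (p j).eval ξ ≠ 0 → (p j).eval c * (p j).eval ξ > 0 := by
    intro j hj hne
    exact sign_const (q := p j) h1.le (fun x hx => by
      rcases eq_or_ne x ξ with h | h
      · rwa [h]
      · exact eval_prod_ne p k j hj x (hno x ⟨hx.1, by linarith [hx.2]⟩ h))
  have hconsd : ∀ j, j < k → (p j).eval ξ ≠ 0 → (p j).eval d * (p j).eval ξ > 0 := by
    intro j hj hne
    have := sign_const (q := p j) h2.le (fun x hx => by
      rcases eq_or_ne x ξ with h | h
      · rwa [h]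
      · exact eval_prod_ne p k j hj x (hno x ⟨by linarith [hx.1], hx.2⟩ h))
    nlinarith
  -- u has constant sign on [c,d]
  have hu_ne : ∀ x ∈ Set.Icc c d, u.eval x ≠ 0 := by
    intro x hx hz
    rcases eq_or_ne x ξ with h | h
    · exact huξ (h ▸ hz)
    · apply hno x hx h
      rw [Polynomial.eval_prod]
      apply Finset.prod_eq_zero (Finset.mem_range.2 (show 0 < k by omega))
      rw [hpu]
      simp [hz]
  have huc : u.eval c * u.eval ξ > 0 :=
    sign_const h1.le (fun x hx => hu_ne x ⟨hx.1, by linarith [hx.2]⟩)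
  have hud : u.eval ξ * u.eval d > 0 :=
    sign_const h2.le (fun x hx => hu_ne x ⟨by linarith [hx.1], hx.2⟩)
  have hp1c : (p 1).eval c * (p 1).eval ξ > 0 := hconsc 1 (by omega) hδ1
  have hp1d : (p 1).eval d * (p 1).eval ξ > 0 := hconsd 1 (by omega) hδ1
  have hevc : (p 0).eval c = (c - ξ) * u.eval c := by rw [hpu]; simp
  have hevd : (p 0).eval d = (d - ξ) * u.eval d := by rw [hpu]; simp
  have hopp : (p 0).eval c * (p 1).eval c < 0 := by
    rw [hevc]
    rcases lt_or_gt_of_ne huξ with hb | hb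
    · have ha : u.eval c < 0 := by nlinarith
      have he : (p 1).eval ξ < 0 := by nlinarith
      have hf : (p 1).eval c < 0 := by nlinarith
      nlinarith [mul_pos_of_neg_of_neg ha hf]
    · have ha : u.eval c > 0 := by nlinarith
      have he : (p 1).eval ξ > 0 := by nlinarith
      have hf : (p 1).eval c > 0 := by nlinarith
      nlinarith [mul_pos ha hf]
  have hsame : (p 0).eval d * (p 1).eval d > 0 := by
    rw [hevd]
    rcases lt_or_gt_of_ne huξ with hb | hb
    · have ha : u.eval d < 0 := by nlinarith
      have he : (p 1).eval ξ < 0 := by nlinarith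
      have hf : (p 1).eval d < 0 := by nlinarith
      nlinarith [mul_pos_of_neg_of_neg ha hf]
    · have ha : u.eval d > 0 := by nlinarith
      have he : (p 1).eval ξ > 0 := by nlinarith
      have hf : (p 1).eval d > 0 := by nlinarith
      nlinarith [mul_pos ha hf]
  have hL : SCF (fun j => (p j).eval c) k = SCF (fun j => (p j).eval ξ) k + 1 := by
    rw [SCF_eq_SC _ _ hcleanc]
    exact core1 k _ _ hk2 hcleanc hconsc (fun j hj hj1 hz => hmid j ξ hj hj1 hz)
      (hlast ξ) hroot hδ1 hopp
  have hR : SCF (fun j => (p j).eval d) k = SCF (fun j => (p j).eval ξ) k := by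
    rw [SCF_eq_SC _ _ hcleand]
    exact core0 k _ _ hk2 hcleand hconsd (fun j hj hj1 hz => hmid j ξ hj hj1 hz)
      (hlast ξ) hroot hδ1 hsame
  omega

theorem pick_left {T : Set ℝ} (hT : T.Finite) {c ξ : ℝ} (h : c < ξ) :
    ∃ c', c < c' ∧ c' < ξ ∧ ∀ x, c' ≤ x → x < ξ → x ∉ T := by
  have hT' : (T ∩ Set.Ioo c ξ).Finite := hT.subset Set.inter_subset_left
  rcases Set.eq_empty_or_nonempty (T ∩ Set.Ioo c ξ) with he | hne
  · obtain ⟨c', hc1, hc2⟩ := exists_between h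
    refine ⟨c', hc1, hc2, fun x hx1 hx2 hxT => ?_⟩
    exact (Set.eq_empty_iff_forall_notMem.1 he x) ⟨hxT, lt_of_lt_of_le hc1 hx1, hx2⟩
  · have hne' : hT'.toFinset.Nonempty := by
      rwa [← Set.Finite.toFinset_nonempty hT']  at hne
    set M := hT'.toFinset.max' hne' with hMdef
    have hM : M ∈ T ∩ Set.Ioo c ξ := by
      have := hT'.toFinset.max'_mem hne'
      rwa [Set.Finite.mem_toFinset] at this
    obtain ⟨c', hc1, hc2⟩ := exists_between hM.2.2
    refine ⟨c', lt_trans hM.2.1 hc1, hc2, fun x hx1 hx2 hxT => ?_⟩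
    have hxmem : x ∈ hT'.toFinset := by
      rw [Set.Finite.mem_toFinset]
      exact ⟨hxT, lt_trans hM.2.1 (lt_of_lt_of_le hc1 hx1), hx2⟩
    have := hT'.toFinset.le_max' x hxmem
    have : x < x := lt_of_le_of_lt this (lt_of_lt_of_le hc1 hx1)
    exact lt_irrefl x this

theorem pick_right {T : Set ℝ} (hT : T.Finite) {ξ d : ℝ} (h : ξ < d) :
    ∃ d', ξ < d' ∧ d' < d ∧ ∀ x, ξ < x → x ≤ d' → x ∉ T := by
  have hT' : (T ∩ Set.Ioo ξ d).Finite := hT.subset Set.inter_subset_left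
  rcases Set.eq_empty_or_nonempty (T ∩ Set.Ioo ξ d) with he | hne
  · obtain ⟨d', hd1, hd2⟩ := exists_between h
    refine ⟨d', hd1, hd2, fun x hx1 hx2 hxT => ?_⟩
    exact (Set.eq_empty_iff_forall_notMem.1 he x) ⟨hxT, hx1, lt_of_le_of_lt hx2 hd2⟩
  · have hne' : hT'.toFinset.Nonempty := by
      rwa [← Set.Finite.toFinset_nonempty hT'] at hne
    set M := hT'.toFinset.min' hne' with hMdef
    have hM : M ∈ T ∩ Set.Ioo ξ d := by
      have := hT'.toFinset.min'_mem hne'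
      rwa [Set.Finite.mem_toFinset] at this
    obtain ⟨d', hd1, hd2⟩ := exists_between hM.2.1
    refine ⟨d', hd1, lt_trans hd2 hM.2.2, fun x hx1 hx2 hxT => ?_⟩
    have hxmem : x ∈ hT'.toFinset := by
      rw [Set.Finite.mem_toFinset]
      exact ⟨hxT, hx1, lt_trans (lt_of_le_of_lt hx2 hd2) hM.2.2⟩
    have := hT'.toFinset.min'_le x hxmem
    have : x < x := lt_of_le_of_lt hx2 (lt_of_lt_of_le hd2 this)
    exact lt_irrefl x this

theorem chain_main (p : ℕ → Polynomial ℝ) (k : ℕ) (hk : 1 ≤ k)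
    (hne : ∀ j, j < k → p j ≠ 0)
    (hlast : ∀ x : ℝ, (p (k-1)).eval x ≠ 0)
    (hmid : ∀ j x, 0 < j → j + 1 < k → (p j).eval x = 0 →
      (p (j-1)).eval x * (p (j+1)).eval x < 0)
    (hfst : ∀ ξ : ℝ, (p 0).eval ξ = 0 → ∃ u : Polynomial ℝ,
      p 0 = (X - C ξ) * u ∧ u.eval ξ ≠ 0 ∧ u.eval ξ * (p 1).eval ξ > 0) :
    ∀ n : ℕ, ∀ c d : ℝ, c < d → (p 0).eval c ≠ 0 → (p 0).eval d ≠ 0 →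
      {x | x ∈ Set.Ioo c d ∧ ((Finset.range k).prod p).eval x = 0}.ncard = n →
      SCF (fun j => (p j).eval c) k
        = SCF (fun j => (p j).eval d) k + {x | x ∈ Set.Ioo c d ∧ (p 0).eval x = 0}.ncard := by
  have hP : ((Finset.range k).prod p) ≠ 0 := by
    rw [Finset.prod_ne_zero_iff]
    exact fun j hj => hne j (Finset.mem_range.1 hj)
  have hTfin : {x : ℝ | ((Finset.range k).prod p).eval x = 0}.Finite :=
    Polynomial.finite_setOf_isRoot hP
  intro n
  induction n using Nat.strong_induction_on with
  | _ n ih =>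
    intro c d hcd h0c h0d hcard
    -- roots of p 0 are roots of the product
    have hsubP : ∀ x : ℝ, (p 0).eval x = 0 → ((Finset.range k).prod p).eval x = 0 := by
      intro x hx
      rw [Polynomial.eval_prod]
      exact Finset.prod_eq_zero (Finset.mem_range.2 (by omega)) hx
    rcases Set.eq_empty_or_nonempty
        {x | x ∈ Set.Ioo c d ∧ ((Finset.range k).prod p).eval x = 0} with hS | hS
    · -- no roots of the product at all in (c,d)
      have hroots0 : {x | x ∈ Set.Ioo c d ∧ (p 0).eval x = 0} = ∅ := by
        rw [Set.eq_empty_iff_forall_notMem]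
        intro x ⟨hx1, hx2⟩
        exact (Set.eq_empty_iff_forall_notMem.1 hS x) ⟨hx1, hsubP x hx2⟩
      rw [hroots0, Set.ncard_empty, add_zero]
      set m := (c + d) / 2 with hm
      have hm1 : c < m := by rw [hm]; linarith
      have hm2 : m < d := by rw [hm]; linarith
      have e1 := chain_right p k hk hlast hmid hm1
        (fun x hx hz => (Set.eq_empty_iff_forall_notMem.1 hS x)
          ⟨⟨hx.1, lt_of_le_of_lt hx.2 hm2⟩, hz⟩) h0c
      have e2 := chain_left p k hk hlast hmid hm2
        (fun x hx hz => (Set.eq_empty_iff_forall_notMem.1 hS x)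
          ⟨⟨lt_of_lt_of_le hm1 hx.1, hx.2⟩, hz⟩) h0d
      rw [e1, e2]
    · obtain ⟨ξ, hξIoo, hξP⟩ := hS
      obtain ⟨c', hc1, hc2, hc3⟩ := pick_left hTfin hξIoo.1
      obtain ⟨d', hd1, hd2, hd3⟩ := pick_right hTfin hξIoo.2
      have hPc' : ((Finset.range k).prod p).eval c' ≠ 0 := by
        intro hz; exact hc3 c' (le_refl c') hc2 hz
      have hPd' : ((Finset.range k).prod p).eval d' ≠ 0 := by
        intro hz; exact hd3 d' hd1 (le_refl d') hz
      have h0c' : (p 0).eval c' ≠ 0 := fun hz => hPc' (hsubP c' hz)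
      have h0d' : (p 0).eval d' ≠ 0 := fun hz => hPd' (hsubP d' hz)
      set S := {x | x ∈ Set.Ioo c d ∧ ((Finset.range k).prod p).eval x = 0} with hSdef
      have hSfin : S.Finite := hTfin.subset (fun x hx => hx.2)
      -- left piece
      have hlt1 : {x | x ∈ Set.Ioo c c' ∧ ((Finset.range k).prod p).eval x = 0}.ncard < n := by
        rw [← hcard]
        apply Set.ncard_lt_ncard _ hSfin
        rw [Set.ssubset_iff_of_subset (by
          intro x hx
          exact ⟨⟨hx.1.1, lt_trans hx.1.2 (lt_trans hc2 hξIoo.2)⟩, hx.2⟩)]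
        exact ⟨ξ, ⟨hξIoo, hξP⟩, fun hcon => absurd hcon.1.2 (by push_neg; linarith)⟩
      have hlt2 : {x | x ∈ Set.Ioo d' d ∧ ((Finset.range k).prod p).eval x = 0}.ncard < n := by
        rw [← hcard]
        apply Set.ncard_lt_ncard _ hSfin
        rw [Set.ssubset_iff_of_subset (by
          intro x hx
          exact ⟨⟨lt_trans (lt_trans hξIoo.1 hd1) hx.1.1, hx.1.2⟩, hx.2⟩)]
        exact ⟨ξ, ⟨hξIoo, hξP⟩, fun hcon => absurd hcon.1.1 (by push_neg; linarith)⟩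
      have e1 := ih _ hlt1 c c' hc1 h0c h0c' rfl
      have e2 := ih _ hlt2 d' d hd2 h0d' h0d rfl
      -- middle piece
      have hnomid : ∀ x ∈ Set.Icc c' d', x ≠ ξ →
          ((Finset.range k).prod p).eval x ≠ 0 := by
        intro x hx hxξ hz
        rcases lt_or_gt_of_ne hxξ with h | h
        · exact hc3 x hx.1 h hz
        · exact hd3 x h hx.2 hz
      -- finiteness of root-of-p0 pieces
      have h0fin : ∀ s : Set ℝ, {x | x ∈ s ∧ (p 0).eval x = 0}.Finite := by
        intro s
        exact hTfin.subset (fun x hx => hsubP x hx.2)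
      by_cases hξ0 : (p 0).eval ξ = 0
      · have emid := chain_cross p k hk hlast hmid hfst hc2 hd1 hnomid hξ0
        -- decompose the root set
        have hdecomp : {x | x ∈ Set.Ioo c d ∧ (p 0).eval x = 0}
            = {x | x ∈ Set.Ioo c c' ∧ (p 0).eval x = 0}
              ∪ ({ξ} ∪ {x | x ∈ Set.Ioo d' d ∧ (p 0).eval x = 0}) := by
          ext x
          constructor
          · intro ⟨hx1, hx2⟩
            rcases eq_or_ne x ξ with h | h
            · exact Or.inr (Or.inl h)
            have hxP := hsubP x hx2
            have h1 : ¬ (c' ≤ x ∧ x < ξ) := fun hcon => hc3 x hcon.1 hcon.2 hxP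
            have h2 : ¬ (ξ < x ∧ x ≤ d') := fun hcon => hd3 x hcon.1 hcon.2 hxP
            rcases lt_or_gt_of_ne h with hlt | hgt
            · left
              refine ⟨⟨hx1.1, ?_⟩, hx2⟩
              by_contra hcon
              push_neg at hcon
              exact h1 ⟨hcon, hlt⟩
            · right; right
              refine ⟨⟨?_, hx1.2⟩, hx2⟩
              by_contra hcon
              push_neg at hcon
              exact h2 ⟨hgt, hcon⟩
          · intro hx
            rcases hx with ⟨hx1, hx2⟩ | hx | ⟨hx1, hx2⟩
            · exact ⟨⟨hx1.1, lt_trans hx1.2 (lt_trans hc2 hξIoo.2)⟩, hx2⟩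
            · rw [Set.mem_singleton_iff] at hx
              subst hx
              exact ⟨hξIoo, hξ0⟩
            · exact ⟨⟨lt_trans (lt_trans hξIoo.1 hd1) hx1.1, hx1.2⟩, hx2⟩
        have hcount : {x | x ∈ Set.Ioo c d ∧ (p 0).eval x = 0}.ncard
            = {x | x ∈ Set.Ioo c c' ∧ (p 0).eval x = 0}.ncard
              + (1 + {x | x ∈ Set.Ioo d' d ∧ (p 0).eval x = 0}.ncard) := by
          rw [hdecomp]
          rw [Set.ncard_union_eq ?disj1 (h0fin _) (((Set.finite_singleton ξ).union (h0fin _)))]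
          case disj1 =>
            rw [Set.disjoint_union_right]
            constructor
            · rw [Set.disjoint_singleton_right]
              intro hcon
              exact absurd hcon.1.2 (by push_neg; linarith)
            · rw [Set.disjoint_iff_forall_ne]
              intro x hx y hy hxy
              subst hxy
              have := hx.1.2; have := hy.1.1
              linarith
          congr 1
          rw [Set.ncard_union_eq ?disj2 (Set.finite_singleton ξ) (h0fin _),
            Set.ncard_singleton]
          case disj2 =>
            rw [Set.disjoint_singleton_left]
            intro hcon
            exact absurd hcon.1.1 (by push_neg; linarith)
        rw [hcount, e1, emid, e2]
        ring
      · -- ξ is not a root of p 0 : variation constant across the middle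
        have emid1 := chain_left p k hk hlast hmid hc2
          (fun x hx hz => hc3 x hx.1 hx.2 hz) hξ0
        have emid2 := chain_right p k hk hlast hmid hd1
          (fun x hx hz => hd3 x hx.1 hx.2 hz) hξ0
        have hdecomp : {x | x ∈ Set.Ioo c d ∧ (p 0).eval x = 0}
            = {x | x ∈ Set.Ioo c c' ∧ (p 0).eval x = 0}
              ∪ {x | x ∈ Set.Ioo d' d ∧ (p 0).eval x = 0} := by
          ext x
          constructor
          · intro ⟨hx1, hx2⟩
            have h : x ≠ ξ := fun hcon => hξ0 (hcon ▸ hx2)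
            have hxP := hsubP x hx2
            have h1 : ¬ (c' ≤ x ∧ x < ξ) := fun hcon => hc3 x hcon.1 hcon.2 hxP
            have h2 : ¬ (ξ < x ∧ x ≤ d') := fun hcon => hd3 x hcon.1 hcon.2 hxP
            rcases lt_or_gt_of_ne h with hlt | hgt
            · left
              refine ⟨⟨hx1.1, ?_⟩, hx2⟩
              by_contra hcon
              push_neg at hcon
              exact h1 ⟨hcon, hlt⟩
            · right
              refine ⟨⟨?_, hx1.2⟩, hx2⟩
              by_contra hcon
              push_neg at hcon
              exact h2 ⟨hgt, hcon⟩
          · intro hx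
            rcases hx with ⟨hx1, hx2⟩ | ⟨hx1, hx2⟩
            · exact ⟨⟨hx1.1, lt_trans hx1.2 (lt_trans hc2 hξIoo.2)⟩, hx2⟩
            · exact ⟨⟨lt_trans (lt_trans hξIoo.1 hd1) hx1.1, hx1.2⟩, hx2⟩
        have hcount : {x | x ∈ Set.Ioo c d ∧ (p 0).eval x = 0}.ncard
            = {x | x ∈ Set.Ioo c c' ∧ (p 0).eval x = 0}.ncard
              + {x | x ∈ Set.Ioo d' d ∧ (p 0).eval x = 0}.ncard := by
          rw [hdecomp]
          apply Set.ncard_union_eq _ (h0fin _) (h0fin _)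
          rw [Set.disjoint_iff_forall_ne]
          intro x hx y hy hxy
          subst hxy
          have := hx.1.2; have := hy.1.1
          linarith
        rw [hcount, e1, emid1, emid2, e2]
        ring

theorem sturmSeq_zero_eq (f : Polynomial ℝ) : sturmSeq f 0 = f := rfl
theorem sturmSeq_one_eq (f : Polynomial ℝ) : sturmSeq f 1 = derivative f := rfl

theorem sturmSeq_rec (f : Polynomial ℝ) (j : ℕ) :
    sturmSeq f (j+2) = -(sturmSeq f j % sturmSeq f (j+1)) := rfl

/-- Division identity for the Sturm sequence. -/
theorem sturm_bezout (f : Polynomial ℝ) (j : ℕ) :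
    sturmSeq f j = sturmSeq f (j+1) * (sturmSeq f j / sturmSeq f (j+1)) - sturmSeq f (j+2) := by
  have h := EuclideanDomain.div_add_mod (sturmSeq f j) (sturmSeq f (j+1))
  rw [sturmSeq_rec, sub_neg_eq_add]
  linear_combination -h

theorem sturm_exists_zero (f : Polynomial ℝ) : ∃ j, sturmSeq f j = 0 := by
  by_contra h
  push_neg at h
  have hdec : ∀ n : ℕ, (sturmSeq f (n+2)).natDegree < (sturmSeq f (n+1)).natDegree := by
    intro n
    have h2 : (sturmSeq f (n+2)).degree < (sturmSeq f (n+1)).degree := by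
      rw [sturmSeq_rec, degree_neg]
      exact EuclideanDomain.mod_lt _ (h (n+1))
    exact natDegree_lt_natDegree (h (n+2)) h2
  have hle : ∀ n : ℕ, (sturmSeq f (n+1)).natDegree + n ≤ (sturmSeq f 1).natDegree := by
    intro n
    induction n with
    | zero => simp
    | succ m ih =>
        have h2 := hdec m
        show (sturmSeq f (m+2)).natDegree + (m+1) ≤ _
        omega
  have := hle ((sturmSeq f 1).natDegree + 1)
  omega

theorem sturmSeq_sturmLength (f : Polynomial ℝ) : sturmSeq f (sturmLength f) = 0 :=
  Nat.sInf_mem (sturm_exists_zero f)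

theorem sturmSeq_ne_zero (f : Polynomial ℝ) {j : ℕ} (hj : j < sturmLength f) :
    sturmSeq f j ≠ 0 := by
  intro h
  have : sturmLength f ≤ j := Nat.sInf_le (show j ∈ {i : ℕ | sturmSeq f i = 0} from h)
  omega

theorem one_le_sturmLength {f : Polynomial ℝ} (hf : f ≠ 0) : 1 ≤ sturmLength f := by
  by_contra h
  push_neg at h
  have h0 : sturmLength f = 0 := by omega
  have := sturmSeq_sturmLength f
  rw [h0, sturmSeq_zero_eq] at this
  exact hf this

/-- The last nonzero entry divides all the preceding ones. -/
theorem g_dvd (f : Polynomial ℝ) :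
    ∀ m, m ≤ sturmLength f →
      sturmSeq f (sturmLength f - 1) ∣ sturmSeq f (sturmLength f - m) := by
  intro m
  induction m using Nat.strong_induction_on with
  | _ m ih =>
    match m with
    | 0 => intro _; rw [Nat.sub_zero, sturmSeq_sturmLength]; exact dvd_zero _
    | 1 => intro _; exact dvd_refl _
    | (m+2) =>
      intro hm
      have h1 := ih (m+1) (by omega) (by omega)
      have h0 := ih m (by omega) (by omega)
      have hb := sturm_bezout f (sturmLength f - (m+2))
      rw [show sturmLength f - (m+2) + 1 = sturmLength f - (m+1) by omega,
        show sturmLength f - (m+2) + 2 = sturmLength f - m by omega] at hb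
      rw [hb]
      exact dvd_sub (Dvd.dvd.mul_right h1 _) h0

/-- A common divisor of the first two entries divides all of them. -/
theorem common_dvd (f d : Polynomial ℝ) (h0 : d ∣ sturmSeq f 0) (h1 : d ∣ sturmSeq f 1) :
    ∀ j, d ∣ sturmSeq f j := by
  intro j
  induction j using Nat.strong_induction_on with
  | _ j ihj =>
    match j with
    | 0 => exact h0
    | 1 => exact h1
    | (j+2) =>
      have hb := sturm_bezout f j
      have he : sturmSeq f (j+2)
          = sturmSeq f (j+1) * (sturmSeq f j / sturmSeq f (j+1)) - sturmSeq f j := by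
        linear_combination hb
      rw [he]
      exact dvd_sub (Dvd.dvd.mul_right (ihj (j+1) (by omega)) _) (ihj j (by omega))

theorem evalList_congr (v w : ℕ → ℝ) (k : ℕ) (h : ∀ j, j < k → v j = w j) :
    evalList v k = evalList w k := by
  induction k generalizing v w with
  | zero => rfl
  | succ n ih =>
      rw [evalList_succ, evalList_succ, h 0 (by omega),
        ih (fun i => v (i+1)) (fun i => w (i+1)) (fun j hj => h (j+1) (by omega))]

/-- **Sturm's Theorem.** For a nonzero real polynomial `f` and `a < b` with
`f(a) ≠ 0 ≠ f(b)`, the number of distinct real roots of `f` in `(a, b)`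
equals `var(f, a) - var(f, b)`. -/
theorem sturm_theorem (f : Polynomial ℝ) (hf : f ≠ 0) (a b : ℝ) (hab : a < b)
    (ha : f.eval a ≠ 0) (hb : f.eval b ≠ 0) :
    ({x : ℝ | x ∈ Set.Ioo a b ∧ f.eval x = 0}.ncard : ℤ) =
      (sturmVar f a : ℤ) - (sturmVar f b : ℤ) := by
  set k := sturmLength f with hkdef
  have hk1 : 1 ≤ k := one_le_sturmLength hf
  have hfk : sturmSeq f k = 0 := sturmSeq_sturmLength f
  have hnez : ∀ j, j < k → sturmSeq f j ≠ 0 := fun j hj => sturmSeq_ne_zero f hj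
  set g := sturmSeq f (k-1) with hgdef
  have hgne : g ≠ 0 := hnez _ (by omega)
  have hgdvd : ∀ j, j ≤ k → g ∣ sturmSeq f j := by
    intro j hj
    have := g_dvd f (k - j) (by omega)
    rwa [show k - (k - j) = j by omega] at this
  set p := fun j => sturmSeq f j / g with hpdef
  have hmul : ∀ j, j ≤ k → g * p j = sturmSeq f j := fun j hj =>
    EuclideanDomain.mul_div_cancel' hgne (hgdvd j hj)
  have hpk : p (k-1) = 1 := EuclideanDomain.div_self hgne
  have hne : ∀ j, j < k → p j ≠ 0 := fun j hj h0 =>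
    hnez j hj (by rw [← hmul j hj.le, h0, mul_zero])
  have hlast : ∀ x : ℝ, (p (k-1)).eval x ≠ 0 := by
    intro x
    rw [hpk]
    simp
  have hf0 : g * p 0 = f := hmul 0 (by omega)
  -- recurrence for the reduced chain
  have hprec : ∀ j, j + 2 ≤ k →
      p j = p (j+1) * (sturmSeq f j / sturmSeq f (j+1)) - p (j+2) := by
    intro j hj
    apply mul_left_cancel₀ hgne
    rw [mul_sub, ← mul_assoc, hmul j (by omega), hmul (j+1) (by omega), hmul (j+2) hj]
    exact sturm_bezout f j
  -- no two consecutive entries share a root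
  have hconsec : ∀ (x : ℝ) (j : ℕ), j + 1 ≤ k - 1 →
      (p j).eval x = 0 → (p (j+1)).eval x = 0 → False := by
    intro x j hj hj0 hj1
    have up : ∀ n, ∀ i, i + 1 + n = k - 1 → (p i).eval x = 0 → (p (i+1)).eval x = 0 →
        (p (k-1)).eval x = 0 := by
      intro n
      induction n with
      | zero =>
          intro i hi h0 h1
          rwa [show k-1 = i+1 by omega]
      | succ m ihm =>
          intro i hi h0 h1
          have hrec := hprec i (by omega)
          have h2 : (p (i+2)).eval x = 0 := by
            have hcg := congrArg (Polynomial.eval x) hrec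
            simp only [Polynomial.eval_sub, Polynomial.eval_mul, h0, h1, zero_mul] at hcg
            linarith
          exact ihm (i+1) (by omega) h1 h2
    exact hlast x (up (k - 1 - (j+1)) j (by omega) hj0 hj1)
  have hmid : ∀ j x, 0 < j → j + 1 < k → (p j).eval x = 0 →
      (p (j-1)).eval x * (p (j+1)).eval x < 0 := by
    intro j x hj0 hjk hz
    have hj1 : (p (j+1)).eval x ≠ 0 := fun h => hconsec x j (by omega) hz h
    have hrec := hprec (j-1) (by omega)
    rw [show j-1+1 = j by omega, show j-1+2 = j+1 by omega] at hrec
    have hval : (p (j-1)).eval x = - (p (j+1)).eval x := by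
      have hcg := congrArg (Polynomial.eval x) hrec
      simp only [Polynomial.eval_sub, Polynomial.eval_mul, hz, zero_mul] at hcg
      linarith
    rw [hval]
    have := mul_self_pos.2 hj1
    nlinarith
  -- any root of f forces the chain to have length at least 2
  have hk2_of_root : ∀ ξ : ℝ, f.eval ξ = 0 → 2 ≤ k := by
    intro ξ hξ
    by_contra h
    have hk1' : k = 1 := by omega
    have hd0 : derivative f = 0 := by
      rw [← sturmSeq_one_eq f, ← hk1']
      exact hfk
    have hC := Polynomial.eq_C_of_derivative_eq_zero hd0
    rw [hC] at hξ
    simp only [Polynomial.eval_C] at hξ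
    rw [hC, hξ, map_zero] at hf
    exact hf rfl
  -- multiplicity computation:  rootMultiplicity ξ g = rootMultiplicity ξ f - 1
  have hmult : ∀ ξ : ℝ, f.eval ξ = 0 → rootMultiplicity ξ g = rootMultiplicity ξ f - 1 := by
    intro ξ hξ
    have hk2 := hk2_of_root ξ hξ
    have hf' : derivative f ≠ 0 := by
      rw [← sturmSeq_one_eq f]
      exact hnez 1 (by omega)
    have hdm : rootMultiplicity ξ (derivative f) = rootMultiplicity ξ f - 1 :=
      Polynomial.derivative_rootMultiplicity_of_root hξ
    have hgf' : g ∣ derivative f := by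
      rw [← sturmSeq_one_eq f]
      exact hgdvd 1 (by omega)
    have hle : rootMultiplicity ξ g ≤ rootMultiplicity ξ f - 1 := by
      rw [← hdm]
      exact (Polynomial.le_rootMultiplicity_iff hf').2
        (dvd_trans (Polynomial.pow_rootMultiplicity_dvd g ξ) hgf')
    have hge : rootMultiplicity ξ f - 1 ≤ rootMultiplicity ξ g := by
      apply (Polynomial.le_rootMultiplicity_iff hgne).2
      have hd0 : (X - C ξ)^(rootMultiplicity ξ f - 1) ∣ sturmSeq f 0 := by
        rw [sturmSeq_zero_eq]
        exact dvd_trans (pow_dvd_pow _ (by omega)) (Polynomial.pow_rootMultiplicity_dvd f ξ)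
      have hd1 : (X - C ξ)^(rootMultiplicity ξ f - 1) ∣ sturmSeq f 1 := by
        rw [sturmSeq_one_eq, ← hdm]
        exact Polynomial.pow_rootMultiplicity_dvd _ _
      exact common_dvd f _ hd0 hd1 (k-1)
    omega
  have hp0mult : ∀ ξ : ℝ, f.eval ξ = 0 → rootMultiplicity ξ (p 0) = 1 := by
    intro ξ hξ
    have hm1 : 1 ≤ rootMultiplicity ξ f := (Polynomial.rootMultiplicity_pos hf).2 hξ
    have hmm := Polynomial.rootMultiplicity_mul (p := g) (q := p 0) (x := ξ)
      (by rw [hf0]; exact hf)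
    rw [hf0] at hmm
    have := hmult ξ hξ
    omega
  -- roots of f and of p 0 coincide
  have hroots_eq : ∀ ξ : ℝ, f.eval ξ = 0 ↔ (p 0).eval ξ = 0 := by
    intro ξ
    constructor
    · intro hξ
      have h1 := hp0mult ξ hξ
      have : 0 < rootMultiplicity ξ (p 0) := by omega
      exact (Polynomial.rootMultiplicity_pos (hne 0 (by omega))).1 this
    · intro hξ
      rw [← hf0]
      simp [hξ]
  -- the first-pair hypothesis of the abstract chain theorem
  have hfst : ∀ ξ : ℝ, (p 0).eval ξ = 0 → ∃ u : Polynomial ℝ,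
      p 0 = (X - C ξ) * u ∧ u.eval ξ ≠ 0 ∧ u.eval ξ * (p 1).eval ξ > 0 := by
    intro ξ hξ0
    have hfξ : f.eval ξ = 0 := (hroots_eq ξ).2 hξ0
    have hk2 := hk2_of_root ξ hfξ
    obtain ⟨m', hm'⟩ : ∃ m', rootMultiplicity ξ f = m' + 1 :=
      ⟨rootMultiplicity ξ f - 1, by
        have := (Polynomial.rootMultiplicity_pos hf).2 hfξ
        omega⟩
    have hmg : rootMultiplicity ξ g = m' := by rw [hmult ξ hfξ, hm']; omega
    have hmp : rootMultiplicity ξ (p 0) = 1 := hp0mult ξ hfξ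
    -- factor p 0
    have hueq0 := Polynomial.pow_mul_divByMonic_rootMultiplicity_eq (p 0) ξ
    have huξ := Polynomial.eval_divByMonic_pow_rootMultiplicity_ne_zero ξ (hne 0 (by omega))
    rw [hmp, pow_one] at hueq0 huξ
    set u : Polynomial ℝ := p 0 /ₘ (X - C ξ) with hu
    have hueq : p 0 = (X - C ξ) * u := hueq0.symm
    -- factor g
    have hweq0 := Polynomial.pow_mul_divByMonic_rootMultiplicity_eq g ξ
    have hwξ := Polynomial.eval_divByMonic_pow_rootMultiplicity_ne_zero ξ hgne
    rw [hmg] at hweq0 hwξ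
    set w : Polynomial ℝ := g /ₘ (X - C ξ) ^ m' with hw
    have hweq : g = (X - C ξ) ^ m' * w := hweq0.symm
    -- the defining identity for p 1
    have hp1eq : g * p 1 = derivative f := by
      rw [← sturmSeq_one_eq f]
      exact hmul 1 (by omega)
    have hAne : (X - C ξ : Polynomial ℝ) ≠ 0 := Polynomial.X_sub_C_ne_zero ξ
    have hfact : f = (X - C ξ) ^ (m' + 1) * (w * u) := by
      rw [← hf0, hweq, hueq]
      ring
    have hid : (X - C ξ) ^ m' * (w * p 1)
        = (X - C ξ) ^ m' * (C ((m' + 1 : ℕ) : ℝ) * (w * u)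
            + (X - C ξ) * derivative (w * u)) := by
      have h1 : (X - C ξ) ^ m' * (w * p 1) = g * p 1 := by
        rw [hweq]; ring
      rw [h1, hp1eq, hfact, derivative_mul, Polynomial.derivative_X_sub_C_pow]
      rw [show m' + 1 - 1 = m' by omega]
      ring
    have hE := mul_left_cancel₀ (pow_ne_zero m' hAne) hid
    have hEv := congrArg (Polynomial.eval ξ) hE
    simp only [Polynomial.eval_mul, Polynomial.eval_add, Polynomial.eval_C,
      Polynomial.eval_sub, Polynomial.eval_X, sub_self, zero_mul, add_zero] at hEv
    -- hEv : w(ξ) * p1(ξ) = (m'+1) * (w(ξ) * u(ξ))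
    have hp1ξ : (p 1).eval ξ = ((m' + 1 : ℕ) : ℝ) * u.eval ξ := by
      apply mul_left_cancel₀ hwξ
      rw [hEv]
      ring
    refine ⟨u, hueq, huξ, ?_⟩
    rw [hp1ξ]
    have h1 : (0:ℝ) < ((m' + 1 : ℕ) : ℝ) := by positivity
    have h2 : 0 < u.eval ξ * u.eval ξ := mul_self_pos.2 huξ
    nlinarith
  -- endpoints
  have hp0a : (p 0).eval a ≠ 0 := fun h => ha ((hroots_eq a).2 h)
  have hp0b : (p 0).eval b ≠ 0 := fun h => hb ((hroots_eq b).2 h)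
  -- apply the abstract theorem
  have main := chain_main p k hk1 hne hlast hmid hfst
    ({x | x ∈ Set.Ioo a b ∧ ((Finset.range k).prod p).eval x = 0}.ncard)
    a b hab hp0a hp0b rfl
  -- identify sturmVar with the variation of the reduced chain
  have hgeval : ∀ c : ℝ, f.eval c ≠ 0 → g.eval c ≠ 0 := by
    intro c hc hgz
    apply hc
    rw [← hf0]
    simp [hgz]
  have hvar : ∀ c : ℝ, f.eval c ≠ 0 → sturmVar f c = SCF (fun j => (p j).eval c) k := by
    intro c hc
    have hgc := hgeval c hc
    show signChanges ((((List.range k).map (fun j => (sturmSeq f j).eval c))).filter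
      (fun x => x ≠ 0)) = _
    rw [← evalList_eq_range_map]
    rw [evalList_congr (fun j => (sturmSeq f j).eval c)
      (fun j => g.eval c * (p j).eval c) k (fun j hj => by
        show (sturmSeq f j).eval c = g.eval c * (p j).eval c
        rw [← hmul j hj.le]
        simp)]
    exact SCF_smul (g.eval c) hgc (fun j => (p j).eval c) k
  rw [hvar a ha, hvar b hb]
  have hsets : {x : ℝ | x ∈ Set.Ioo a b ∧ f.eval x = 0}
      = {x : ℝ | x ∈ Set.Ioo a b ∧ (p 0).eval x = 0} := by
    ext x
    simp only [Set.mem_setOf_eq, hroots_eq x]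
  rw [hsets]
  omega
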